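/- Let p be a prime and f a monic polynomial of degree 22 over Q whose roots are the eigenvalues of an operator. If f factors as (1/p)(x-p)^2 g(x) where g is irreducible of degree 20 with non-integral coefficients, then exactly 2 roots λ of f (with multiplicity) have the property that λ/p is a root of unity. -/

import Mathlib

/-!
If `λ / p` is a root of unity then `λ / p`, hence `λ`, is an algebraic integer. A root `λ` of the
irreducible `g` would then have minimal polynomial over `ℚ` with integer coefficients
(`ℤ` is integrally closed), and `g`, whose leading coefficient is `p` because `f` is monic, would be
`p` times that minimal polynomial, so integral. Hence only the double root `p` of `f` qualifies.
-/

open Polynomial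

theorem isIntegral_int_of_div_pow_eq_one {K : Type*} [Field K] {c : ℤ} (hc : (c : K) ≠ 0)
    {z : K} {k : ℕ} (hk : 0 < k) (h : (z / c) ^ k = 1) : IsIntegral ℤ z := by
  have hdiv : IsIntegral ℤ (z / c) := IsIntegral.of_pow hk (h ▸ isIntegral_one)
  simpa only [algebraMap_int_eq, eq_intCast, mul_div_cancel₀ _ hc] using
    (isIntegral_algebraMap (x := c)).mul hdiv

theorem Polynomial.eq_C_leadingCoeff_mul_map_minpoly_int {L : Type*} [Field L] [Algebra ℚ L]
    {g : ℚ[X]} (hg : Irreducible g) {z : L} (hz : aeval z g = 0) (hint : IsIntegral ℤ z) :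
    g = C g.leadingCoeff * (minpoly ℤ z).map (algebraMap ℤ ℚ) := by
  rw [← minpoly.isIntegrallyClosed_eq_field_fractions ℚ L hint, Algebra.algebraMap_self,
    RingHom.id_apply, ← minpoly.eq_of_irreducible hg hz, mul_left_comm, ← C_mul,
    mul_inv_cancel₀ (leadingCoeff_ne_zero.2 hg.ne_zero), C_1, mul_one]

theorem Polynomial.div_pow_ne_one_of_aeval_eq_zero {L : Type*} [Field L] [Algebra ℚ L]
    {g : ℚ[X]} (hg : Irreducible g) {m : ℤ} (hlead : g.leadingCoeff = m)
    (hnonint : ∃ n, (g.coeff n).den ≠ 1) {z : L} (hz : aeval z g = 0) {k : ℕ} (hk : 0 < k) :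
    (z / m) ^ k ≠ 1 := by
  intro h
  have hm : (m : L) ≠ 0 := by
    rw [← map_intCast (algebraMap ℚ L), ← hlead]
    exact (_root_.map_ne_zero _).2 (leadingCoeff_ne_zero.2 hg.ne_zero)
  have hg_eq :=
    eq_C_leadingCoeff_mul_map_minpoly_int hg hz (isIntegral_int_of_div_pow_eq_one hm hk h)
  obtain ⟨n, hn⟩ := hnonint
  apply hn
  rw [hg_eq, coeff_C_mul, coeff_map, hlead, eq_intCast, ← Int.cast_mul]
  exact Rat.den_intCast _

theorem Polynomial.roots_map_C_mul_X_sub_C_pow_mul {K L : Type*} [Field K] [Field L] (φ : K →+* L)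
    {c a : K} (hc : c ≠ 0) (n : ℕ) {g : K[X]} (hg : g ≠ 0) :
    ((C c * (X - C a) ^ n * g).map φ).roots = n • {φ a} + (g.map φ).roots := by
  have hg' : g.map φ ≠ 0 := (Polynomial.map_ne_zero_iff φ.injective).2 hg
  rw [Polynomial.map_mul, Polynomial.map_mul, Polynomial.map_pow, Polynomial.map_sub, map_X,
    map_C, map_C, mul_assoc, roots_C_mul _ ((_root_.map_ne_zero φ).2 hc),
    roots_mul (mul_ne_zero (pow_ne_zero _ (X_sub_C_ne_zero _)) hg'), roots_pow, roots_X_sub_C]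

theorem stmt10_general (p : ℕ) (hp : p.Prime)
    (f g : Polynomial ℚ) (hfmonic : f.Monic)
    (hfac : f = Polynomial.C ((p : ℚ)⁻¹) * (Polynomial.X - Polynomial.C (p : ℚ)) ^ 2 * g)
    (hgirr : Irreducible g)
    (hgnonint : ∃ n : ℕ, (g.coeff n).den ≠ 1) :
    Multiset.card
      (@Multiset.filter ℂ (fun l : ℂ => ∃ k : ℕ, 0 < k ∧ (l / (p : ℂ)) ^ k = 1)
        (Classical.decPred _) ((f.map (algebraMap ℚ ℂ)).roots)) = 2 := by
  classical
  have hpQ : (p : ℚ) ≠ 0 := Nat.cast_ne_zero.2 hp.ne_zero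
  have hlead : g.leadingCoeff = ((p : ℤ) : ℚ) := by
    have h := hfmonic.leadingCoeff
    rw [hfac, leadingCoeff_mul, leadingCoeff_mul, leadingCoeff_C,
      ((monic_X_sub_C _).pow 2).leadingCoeff, mul_one, inv_mul_eq_one₀ hpQ] at h
    exact_mod_cast h.symm
  rw [hfac, roots_map_C_mul_X_sub_C_pow_mul _ (inv_ne_zero hpQ) 2 hgirr.ne_zero,
    Multiset.filter_add, Multiset.filter_eq_self.2, Multiset.filter_eq_nil.2]
  · simp
  · rintro z hz ⟨k, hk, h⟩
    have hroot : aeval z g = 0 := by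
      rw [aeval_def, eval₂_eq_eval_map]
      exact (mem_roots'.1 hz).2
    exact div_pow_ne_one_of_aeval_eq_zero hgirr hlead hgnonint hroot hk (by exact_mod_cast h)
  · intro l hl
    rw [Multiset.nsmul_singleton] at hl
    rw [Multiset.eq_of_mem_replicate hl]
    exact ⟨1, one_pos, by simp [Nat.cast_ne_zero.2 hp.ne_zero]⟩

/-- Let `p` be a prime and `f` a monic polynomial of degree 22 over ℚ. If `f`
factors as `(1/p) · (x - p)² · g(x)` with `g` irreducible of degree 20 having some
non-integral coefficient, then exactly 2 roots `λ` of `f` in ℂ (counted with multiplicity)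
have the property that `λ/p` is a root of unity. -/
theorem stmt10 (p : ℕ) (hp : p.Prime)
    (f g : Polynomial ℚ) (hfmonic : f.Monic) (hfdeg : f.natDegree = 22)
    (hfac : f = Polynomial.C ((p : ℚ)⁻¹) * (Polynomial.X - Polynomial.C (p : ℚ)) ^ 2 * g)
    (hgirr : Irreducible g) (hgdeg : g.natDegree = 20)
    (hgnonint : ∃ n : ℕ, (g.coeff n).den ≠ 1) :
    Multiset.card
      (@Multiset.filter ℂ (fun l : ℂ => ∃ k : ℕ, 0 < k ∧ (l / (p : ℂ)) ^ k = 1)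
        (Classical.decPred _) ((f.map (algebraMap ℚ ℂ)).roots)) = 2 :=
  stmt10_general p hp f g hfmonic hfac hgirr hgnonint
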